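/- arXiv:1108.2401 — 2 statements merged into one kernel-verified Lean document; each statement's English description precedes it below -/
import Mathlib

section
/- Let A be a p×p real positive semidefinite matrix with operator norm ‖A‖_op > 0, and let Z be a standard Gaussian random vector in ℝ^p. Then for every t > 0, the probability that Zᵀ A Z / tr(A) ≥ (1 + t·√(‖A‖_op / tr(A)))² is at most exp(−t²/2). -/
open MeasureTheory ProbabilityTheory Matrix
open scoped ENNReal NNReal Real

set_option maxHeartbeats 1000000
set_option synthInstance.maxHeartbeats 400000

noncomputable def stdGaussian (p : ℕ) : Measure (Fin p → ℝ) :=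
  Measure.pi fun _ => gaussianReal 0 1

noncomputable def opNorm {m n : ℕ} (A : Matrix (Fin m) (Fin n) ℝ) : ℝ :=
  ‖LinearMap.toContinuousLinearMap (Matrix.toEuclideanLin A)‖

noncomputable def euclNorm {p : ℕ} (x : Fin p → ℝ) : ℝ :=
  Real.sqrt (∑ i, x i ^ 2)

noncomputable def frobNorm {m n : ℕ} (A : Matrix (Fin m) (Fin n) ℝ) : ℝ :=
  Real.sqrt (∑ i, ∑ j, A i j ^ 2)

theorem lintegral_pi_prod : ∀ {n : ℕ} (μ : Fin n → Measure ℝ) [∀ i, SigmaFinite (μ i)]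
    (f : Fin n → ℝ → ℝ≥0∞) (_hf : ∀ i, Measurable (f i)),
    ∫⁻ x, ∏ i, f i (x i) ∂Measure.pi μ = ∏ i, ∫⁻ x, f i x ∂μ i := by
  intro n
  induction n with
  | zero => intro μ _ f hf; simp
  | succ n ih =>
    intro μ _ f hf
    have hmp := (measurePreserving_piFinSuccAbove μ 0).symm
    rw [← hmp.lintegral_comp (f := fun x => ∏ i, f i (x i))
      (Finset.measurable_prod _ fun i _ => (hf i).comp (measurable_pi_apply i))]
    have : ∀ y : ℝ × (Fin n → ℝ),
        (∏ i, f i ((MeasurableEquiv.piFinSuccAbove (fun _ => ℝ) 0).symm y i))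
        = f 0 y.1 * ∏ i : Fin n, f i.succ (y.2 i) := by
      intro y
      rw [Fin.prod_univ_succ]
      simp [MeasurableEquiv.piFinSuccAbove_symm_apply, Fin.insertNthEquiv,
        Fin.insertNth_zero, Fin.zero_succAbove]
    simp_rw [this]
    rw [lintegral_prod_mul (f := f 0) (g := fun y : Fin n → ℝ => ∏ i : Fin n, f i.succ (y i))
      (hf 0).aemeasurable
      (Finset.measurable_prod _ fun i _ => (hf i.succ).comp
        (measurable_pi_apply i)).aemeasurable]
    have h0 : (fun j : Fin n => μ (Fin.succAbove 0 j)) = fun j : Fin n => μ j.succ := by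
      funext j; rw [Fin.zero_succAbove]
    rw [h0, ih _ _ (fun i => hf i.succ), Fin.prod_univ_succ]

theorem stdGaussian_eq_withDensity (p : ℕ) :
    stdGaussian p = (volume : Measure (Fin p → ℝ)).withDensity
      (fun z => ∏ i, gaussianPDF 0 1 (z i)) := by
  refine (Measure.pi_eq fun s hs => ?_)
  rw [withDensity_apply _ (MeasurableSet.univ_pi hs),
    ← lintegral_indicator (MeasurableSet.univ_pi hs)]
  have : ∀ z : Fin p → ℝ, (Set.pi Set.univ s).indicator
      (fun z => ∏ i, gaussianPDF 0 1 (z i)) z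
      = ∏ i, (s i).indicator (gaussianPDF 0 1) (z i) := by
    intro z
    by_cases h : z ∈ Set.pi Set.univ s
    · rw [Set.indicator_of_mem h]
      exact Finset.prod_congr rfl fun i _ =>
        (Set.indicator_of_mem (h i (Set.mem_univ i)) _).symm
    · rw [Set.indicator_of_notMem h]
      have : ∃ i, z i ∉ s i := by
        by_contra hc
        push_neg at hc
        exact h fun i _ => hc i
      obtain ⟨i, hi⟩ := this
      exact (Finset.prod_eq_zero (Finset.mem_univ i)
        (by rw [Set.indicator_of_notMem hi])).symm
  simp_rw [this]
  rw [show (volume : Measure (Fin p → ℝ)) = Measure.pi (fun _ => volume) from volume_pi]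
  rw [lintegral_pi_prod _ _ (fun i => (measurable_gaussianPDF 0 1).indicator (hs i))]
  refine Finset.prod_congr rfl fun i _ => ?_
  rw [lintegral_indicator (hs i), gaussianReal_apply 0 one_ne_zero (s i)]

theorem mulVec_measurable {p : ℕ} (M : Matrix (Fin p) (Fin p) ℝ) :
    Measurable (fun z : Fin p → ℝ => M *ᵥ z) := by
  rw [measurable_pi_iff]
  intro i
  simpa [Matrix.mulVec, dotProduct] using
    Finset.measurable_sum (f := fun j (x : Fin p → ℝ) => M i j * x j) Finset.univ fun j _ =>
      by fun_prop

theorem sq_sum_mulVec {p : ℕ} (M : Matrix (Fin p) (Fin p) ℝ) (h : Mᵀ * M = 1)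
    (z : Fin p → ℝ) : ∑ i, (M *ᵥ z) i ^ 2 = ∑ i, z i ^ 2 := by
  have key : ∀ x : Fin p → ℝ, ∑ i, x i ^ 2 = x ⬝ᵥ x := by
    intro x; simp [dotProduct, sq]
  rw [key, key]
  calc (M *ᵥ z) ⬝ᵥ (M *ᵥ z) = (z ᵥ* Mᵀ) ⬝ᵥ (M *ᵥ z) := by rw [Matrix.vecMul_transpose]
    _ = z ⬝ᵥ (Mᵀ *ᵥ (M *ᵥ z)) := (Matrix.dotProduct_mulVec _ _ _).symm
    _ = z ⬝ᵥ ((Mᵀ * M) *ᵥ z) := by rw [Matrix.mulVec_mulVec]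
    _ = z ⬝ᵥ z := by rw [h, Matrix.one_mulVec]

theorem pdf_prod_invariant {p : ℕ} (M : Matrix (Fin p) (Fin p) ℝ) (h : Mᵀ * M = 1)
    (z : Fin p → ℝ) :
    ∏ i, gaussianPDF 0 1 ((M *ᵥ z) i) = ∏ i, gaussianPDF 0 1 (z i) := by
  have key : ∀ x : Fin p → ℝ, ∏ i, gaussianPDF 0 1 (x i)
      = ENNReal.ofReal ((Real.sqrt (2 * π))⁻¹ ^ p * Real.exp (-(∑ i, x i ^ 2) / 2)) := by
    intro x
    simp only [ProbabilityTheory.gaussianPDF]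
    rw [← ENNReal.ofReal_prod_of_nonneg (fun i _ => gaussianPDFReal_nonneg 0 1 (x i))]
    congr 1
    simp only [ProbabilityTheory.gaussianPDFReal, NNReal.coe_one, mul_one, sub_zero]
    rw [Finset.prod_mul_distrib, Finset.prod_const, ← Real.exp_sum, Finset.card_univ,
      Fintype.card_fin]
    congr 1
    rw [← Finset.sum_div, ← Finset.sum_neg_distrib]
  rw [key, key, sq_sum_mulVec M h]

theorem stdGaussian_map_orth {p : ℕ} (M : Matrix (Fin p) (Fin p) ℝ) (h : Mᵀ * M = 1) :
    Measure.map (fun z => M *ᵥ z) (stdGaussian p) = stdGaussian p := by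
  have hdet : M.det ≠ 0 := by
    intro hd
    have := congrArg Matrix.det h
    rw [Matrix.det_mul, Matrix.det_transpose, Matrix.det_one, hd, mul_zero] at this
    exact zero_ne_one this
  have habs : |M.det| = 1 := by
    have := congrArg Matrix.det h
    rw [Matrix.det_mul, Matrix.det_transpose, Matrix.det_one] at this
    nlinarith [abs_nonneg M.det, sq_abs M.det]
  have hvol : Measure.map (fun z : Fin p → ℝ => M *ᵥ z) volume = volume := by
    have := Real.map_matrix_volume_pi_eq_smul_volume_pi hdet
    simp only [abs_inv, habs, inv_one, ENNReal.ofReal_one, one_smul] at this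
    rw [show (fun z : Fin p → ℝ => M *ᵥ z) = ⇑(Matrix.toLin' M) from
      (funext fun z => (Matrix.toLin'_apply M z).symm), this]
  have hmp : MeasurePreserving (fun z : Fin p → ℝ => M *ᵥ z) volume volume :=
    ⟨mulVec_measurable M, hvol⟩
  ext S hS
  rw [Measure.map_apply (mulVec_measurable M) hS, stdGaussian_eq_withDensity,
    withDensity_apply _ (hS.preimage (mulVec_measurable M)), withDensity_apply _ hS,
    ← lintegral_indicator (hS.preimage (mulVec_measurable M)), ← lintegral_indicator hS]
  have hg : Measurable fun z : Fin p → ℝ => ∏ i, gaussianPDF 0 1 (z i) :=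
    Finset.measurable_prod _ fun i _ =>
      (measurable_gaussianPDF 0 1).comp (measurable_pi_apply i)
  rw [← hmp.lintegral_comp (hg.indicator hS)]
  congr 1
  funext z
  by_cases hz : M *ᵥ z ∈ S
  · rw [Set.indicator_of_mem hz, Set.indicator_of_mem (by exact hz), pdf_prod_invariant M h]
  · rw [Set.indicator_of_notMem hz, Set.indicator_of_notMem (by exact hz)]

theorem lintegral_exp_sq_gaussian {s : ℝ} (hs : s < 1/2) :
    ∫⁻ x, ENNReal.ofReal (Real.exp (s * x ^ 2)) ∂(gaussianReal 0 1)
      = ENNReal.ofReal ((Real.sqrt (1 - 2*s))⁻¹) := by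
  have hb : (0:ℝ) < 1/2 - s := by linarith
  have hmeas : Measurable fun x : ℝ => ENNReal.ofReal (Real.exp (s * x ^ 2)) := by
    fun_prop
  rw [gaussianReal_of_var_ne_zero 0 one_ne_zero,
    lintegral_withDensity_eq_lintegral_mul _ (measurable_gaussianPDF 0 1) hmeas]
  have heq : ∀ x : ℝ, gaussianPDF 0 1 x * ENNReal.ofReal (Real.exp (s * x ^ 2))
      = ENNReal.ofReal ((Real.sqrt (2 * π))⁻¹ * Real.exp (-(1/2 - s) * x ^ 2)) := by
    intro x
    rw [gaussianPDF_def, ← ENNReal.ofReal_mul (gaussianPDFReal_nonneg 0 1 x)]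
    congr 1
    simp only [ProbabilityTheory.gaussianPDFReal, NNReal.coe_one, mul_one, sub_zero]
    rw [mul_assoc, ← Real.exp_add]
    ring_nf
  simp only [Pi.mul_apply]
  simp_rw [heq]
  rw [← ofReal_integral_eq_lintegral_ofReal
    ((integrable_exp_neg_mul_sq hb).const_mul _)
    (Filter.Eventually.of_forall fun x => by positivity)]
  congr 1
  rw [MeasureTheory.integral_const_mul, integral_gaussian]
  rw [show π / (1/2 - s) = (2 * π) / (1 - 2*s) by
    rw [div_eq_div_iff hb.ne' (by linarith : (1 - 2*s) ≠ 0)]; ring]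
  have h2π : (0:ℝ) ≤ 2 * π := by positivity
  rw [Real.sqrt_div h2π]
  have hne : Real.sqrt (2 * π) ≠ 0 := by positivity
  field_simp

theorem sqrt_inv_le_exp_aux {u v : ℝ} (hu0 : 0 ≤ u) (huv : u ≤ v) (hv : v < 1) :
    (Real.sqrt (1 - u))⁻¹ ≤ Real.exp (u / (2 * (1 - v))) := by
  have h1v : (0:ℝ) < 1 - v := by linarith
  have h1u : (0:ℝ) < 1 - u := by linarith
  have h2 : (1 - u)⁻¹ ≤ Real.exp (u / (1 - v)) := by
    have e1 : (1 - u)⁻¹ = 1 + u / (1 - u) := by field_simp; ring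
    have e2 : u / (1 - u) ≤ u / (1 - v) :=
      div_le_div_of_nonneg_left hu0 h1v (by linarith)
    have e3 : u / (1 - v) + 1 ≤ Real.exp (u / (1 - v)) := Real.add_one_le_exp _
    linarith
  calc (Real.sqrt (1 - u))⁻¹ = Real.sqrt ((1 - u)⁻¹) := (Real.sqrt_inv _).symm
    _ ≤ Real.sqrt (Real.exp (u / (1 - v))) := Real.sqrt_le_sqrt h2
    _ = Real.exp (u / (1 - v) / 2) := (Real.exp_half _).symm
    _ = Real.exp (u / (2 * (1 - v))) := by rw [div_div]; ring_nf

/-- Upper-tail concentration for Gaussian quadratic forms. -/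
theorem stmt0 {p : ℕ} (A : Matrix (Fin p) (Fin p) ℝ) (hA : A.PosSemidef)
    (hop : 0 < opNorm A) (t : ℝ) (ht : 0 < t) :
    stdGaussian p
      {z | (1 + t * Real.sqrt (opNorm A / A.trace)) ^ 2 ≤ z ⬝ᵥ A *ᵥ z / A.trace}
      ≤ ENNReal.ofReal (Real.exp (-t ^ 2 / 2)) := by
  classical
  set μv : Fin p → ℝ := hA.1.eigenvalues with hμvdef
  set V : Matrix (Fin p) (Fin p) ℝ := (hA.1.eigenvectorUnitary : Matrix (Fin p) (Fin p) ℝ)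
    with hVdef
  have hVunit : V * star V = 1 ∧ star V * V = 1 :=
    ⟨Matrix.mem_unitaryGroup_iff.mp hA.1.eigenvectorUnitary.2,
     Matrix.mem_unitaryGroup_iff'.mp hA.1.eigenvectorUnitary.2⟩
  have hstar : star V = Vᵀ := by
    rw [Matrix.star_eq_conjTranspose, Matrix.conjTranspose_eq_transpose_of_trivial]
  have hV1 : V * Vᵀ = 1 := by rw [← hstar]; exact hVunit.1
  have hV2 : Vᵀ * V = 1 := by rw [← hstar]; exact hVunit.2
  have hspec : A = V * Matrix.diagonal μv * Vᵀ := by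
    have h := hA.1.spectral_theorem
    rw [Unitary.conjStarAlgAut_apply, Matrix.star_eq_conjTranspose,
      Matrix.conjTranspose_eq_transpose_of_trivial] at h
    rw [show (RCLike.ofReal ∘ hA.1.eigenvalues : Fin p → ℝ) = hA.1.eigenvalues from
      funext fun i => by simp [RCLike.ofReal]] at h
    exact h
  -- quadratic form diagonalization
  have hq : ∀ z : Fin p → ℝ, z ⬝ᵥ A *ᵥ z = ∑ i, μv i * ((Vᵀ *ᵥ z) i) ^ 2 := by
    intro z
    calc z ⬝ᵥ A *ᵥ z
        = z ⬝ᵥ (V *ᵥ (Matrix.diagonal μv *ᵥ (Vᵀ *ᵥ z))) := by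
          rw [Matrix.mulVec_mulVec, Matrix.mulVec_mulVec]
          conv_lhs => rw [hspec]
      _ = (z ᵥ* V) ⬝ᵥ (Matrix.diagonal μv *ᵥ (Vᵀ *ᵥ z)) := Matrix.dotProduct_mulVec _ _ _
      _ = (Vᵀ *ᵥ z) ⬝ᵥ (Matrix.diagonal μv *ᵥ (Vᵀ *ᵥ z)) := by
          rw [show V = Vᵀᵀ from (Matrix.transpose_transpose V).symm, Matrix.vecMul_transpose,
            Matrix.transpose_transpose]
      _ = ∑ i, μv i * ((Vᵀ *ᵥ z) i) ^ 2 := by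
          simp only [dotProduct, Matrix.mulVec_diagonal]
          exact Finset.sum_congr rfl fun i _ => by ring
  -- eigenvalue bounds
  have hμ0 : ∀ i, 0 ≤ μv i := fun i => hA.eigenvalues_nonneg i
  have hμle : ∀ i, μv i ≤ opNorm A := by
    intro i
    set v : EuclideanSpace ℝ (Fin p) := hA.1.eigenvectorBasis i with hvdef
    have hnorm1 : ‖v‖ = 1 := hA.1.eigenvectorBasis.orthonormal.1 i
    have happ : (Matrix.toEuclideanLin A) v = μv i • v := by
      apply (WithLp.equiv 2 (Fin p → ℝ)).injective
      have h1 := hA.1.mulVec_eigenvectorBasis i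
      exact h1
    have hle := (LinearMap.toContinuousLinearMap (Matrix.toEuclideanLin A)).le_opNorm v
    rw [hnorm1, mul_one] at hle
    have hcoe : ‖(LinearMap.toContinuousLinearMap (Matrix.toEuclideanLin A)) v‖
        = ‖(Matrix.toEuclideanLin A) v‖ := rfl
    rw [hcoe, happ, norm_smul, hnorm1, mul_one] at hle
    calc μv i ≤ |μv i| := le_abs_self _
      _ = ‖μv i‖ := rfl
      _ ≤ opNorm A := hle
  -- trace
  have htr : A.trace = ∑ i, μv i := by
    conv_lhs => rw [hspec]
    rw [Matrix.trace_mul_comm (V * Matrix.diagonal μv) Vᵀ, ← mul_assoc, hV2, one_mul,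
      Matrix.trace_diagonal]
  have htrpos : 0 < A.trace := by
    rcases lt_or_eq_of_le (Finset.sum_nonneg fun i _ => hμ0 i) with h | h
    · rw [htr]; exact h
    · exfalso
      have hall : ∀ i ∈ Finset.univ, μv i = 0 :=
        (Finset.sum_eq_zero_iff_of_nonneg fun i _ => hμ0 i).mp h.symm
      have hA0 : A = 0 := by
        rw [hspec, show Matrix.diagonal μv = 0 by
          ext i j
          by_cases hij : i = j
          · simp [Matrix.diagonal, hij, hall j (Finset.mem_univ j)]
          · simp [Matrix.diagonal, hij]]
        simp
      rw [hA0] at hop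
      simp [opNorm] at hop
  -- constants
  set b : ℝ := Real.sqrt (opNorm A) with hbdef
  set σ : ℝ := Real.sqrt A.trace with hσdef
  have hb : 0 < b := Real.sqrt_pos.mpr hop
  have hσ : 0 < σ := Real.sqrt_pos.mpr htrpos
  have hb2 : b ^ 2 = opNorm A := Real.sq_sqrt hop.le
  have hσ2 : σ ^ 2 = A.trace := Real.sq_sqrt htrpos.le
  set lam : ℝ := t / (2 * b * (σ + t * b)) with hlamdef
  have hσtb : 0 < σ + t * b := by positivity
  have hlam : 0 < lam := by positivity
  have hlamb2 : 2 * lam * b ^ 2 = t * b / (σ + t * b) := by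
    rw [hlamdef]; field_simp
  have hlamb2lt : 2 * lam * b ^ 2 < 1 := by
    rw [hlamb2, div_lt_one hσtb]; linarith
  set a : ℝ := (σ + t * b) ^ 2 with hadef
  -- rewrite the event
  have hkey : (1 + t * Real.sqrt (opNorm A / A.trace)) ^ 2 * A.trace = a := by
    rw [Real.sqrt_div hop.le, ← hbdef, ← hσdef, hadef, ← hσ2]
    field_simp
    try ring
  have hset : {z : Fin p → ℝ |
        (1 + t * Real.sqrt (opNorm A / A.trace)) ^ 2 ≤ z ⬝ᵥ A *ᵥ z / A.trace}
      = (fun z => Vᵀ *ᵥ z) ⁻¹' {y : Fin p → ℝ | a ≤ ∑ i, μv i * y i ^ 2} := by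
    ext z
    simp only [Set.mem_setOf_eq, Set.mem_preimage]
    rw [le_div_iff₀ htrpos, hkey, hq z]
  have hmg : Measurable fun y : Fin p → ℝ => ∑ i, μv i * y i ^ 2 :=
    Finset.measurable_sum (f := fun i (y : Fin p → ℝ) => μv i * y i ^ 2) _ fun i _ =>
      by fun_prop
  have hS' : MeasurableSet {y : Fin p → ℝ | a ≤ ∑ i, μv i * y i ^ 2} :=
    measurableSet_le measurable_const hmg
  rw [hset, ← Measure.map_apply (mulVec_measurable Vᵀ) hS',
    stdGaussian_map_orth Vᵀ (by rw [Matrix.transpose_transpose]; exact hV1)]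
  -- Chernoff
  set g : (Fin p → ℝ) → ℝ := fun y => ∑ i, μv i * y i ^ 2 with hgdef
  have step1 : stdGaussian p {y | a ≤ g y}
      ≤ ∫⁻ y, ENNReal.ofReal (Real.exp (lam * (g y - a))) ∂stdGaussian p := by
    rw [← lintegral_indicator_one hS']
    refine lintegral_mono fun y => ?_
    by_cases hy : y ∈ {y | a ≤ g y}
    · rw [Set.indicator_of_mem hy, Pi.one_apply,
        show ((1 : ℝ≥0∞)) = ENNReal.ofReal 1 from (ENNReal.ofReal_one).symm]
      exact ENNReal.ofReal_le_ofReal (Real.one_le_exp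
        (mul_nonneg hlam.le (sub_nonneg.mpr hy)))
    · rw [Set.indicator_of_notMem hy]
      exact bot_le
  have hmeasg : Measurable fun y : Fin p → ℝ => ENNReal.ofReal (Real.exp (lam * g y)) := by
    fun_prop
  have step2 : ∫⁻ y, ENNReal.ofReal (Real.exp (lam * (g y - a))) ∂stdGaussian p
      = ENNReal.ofReal (Real.exp (-(lam * a)))
        * ∫⁻ y, ENNReal.ofReal (Real.exp (lam * g y)) ∂stdGaussian p := by
    rw [← lintegral_const_mul _ hmeasg]
    congr 1
    funext y
    rw [← ENNReal.ofReal_mul (Real.exp_pos _).le, ← Real.exp_add]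
    congr 2
    ring
  have step3 : ∫⁻ y, ENNReal.ofReal (Real.exp (lam * g y)) ∂stdGaussian p
      = ∏ i, ENNReal.ofReal ((Real.sqrt (1 - 2 * (lam * μv i)))⁻¹) := by
    have hpt : ∀ y : Fin p → ℝ, ENNReal.ofReal (Real.exp (lam * g y))
        = ∏ i, ENNReal.ofReal (Real.exp ((lam * μv i) * y i ^ 2)) := by
      intro y
      have h1 : lam * g y = ∑ i, lam * μv i * y i ^ 2 := by
        simp only [hgdef, Finset.mul_sum]
        exact Finset.sum_congr rfl fun i _ => by ring
      rw [h1, Real.exp_sum, ENNReal.ofReal_prod_of_nonneg (fun i _ => (Real.exp_pos _).le)]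
    simp_rw [hpt]
    rw [show stdGaussian p = Measure.pi fun _ => gaussianReal 0 1 from rfl,
      lintegral_pi_prod (fun _ => gaussianReal 0 1)
        (fun i x => ENNReal.ofReal (Real.exp (lam * μv i * x ^ 2)))
        (fun i => by fun_prop)]
    refine Finset.prod_congr rfl fun i _ => ?_
    have hsi : lam * μv i < 1 / 2 := by
      have h1 : lam * μv i ≤ lam * opNorm A := mul_le_mul_of_nonneg_left (hμle i) hlam.le
      have h2 : lam * opNorm A < 1 / 2 := by rw [← hb2]; linarith
      linarith
    exact lintegral_exp_sq_gaussian hsi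
  set r : ℝ := (σ + t * b) / σ with hrdef
  have hr : 0 < r := by positivity
  have step4 : ∀ i, ENNReal.ofReal ((Real.sqrt (1 - 2 * (lam * μv i)))⁻¹)
      ≤ ENNReal.ofReal (Real.exp (lam * μv i * r)) := by
    intro i
    refine ENNReal.ofReal_le_ofReal ?_
    have hu0 : (0:ℝ) ≤ 2 * (lam * μv i) := by
      have := hμ0 i
      have := hlam.le
      nlinarith
    have huv : 2 * (lam * μv i) ≤ 2 * lam * b ^ 2 := by
      rw [hb2]
      have := mul_le_mul_of_nonneg_left (hμle i) hlam.le
      linarith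
    have h := sqrt_inv_le_exp_aux hu0 huv hlamb2lt
    refine h.trans (le_of_eq ?_)
    congr 1
    have h1mv : 1 - 2 * lam * b ^ 2 = σ / (σ + t * b) := by
      rw [hlamb2]; field_simp; ring
    rw [h1mv, hrdef]
    field_simp
  have step5 : (∏ i, ENNReal.ofReal ((Real.sqrt (1 - 2 * (lam * μv i)))⁻¹))
      ≤ ENNReal.ofReal (Real.exp (lam * A.trace * r)) := by
    calc (∏ i, ENNReal.ofReal ((Real.sqrt (1 - 2 * (lam * μv i)))⁻¹))
        ≤ ∏ i, ENNReal.ofReal (Real.exp (lam * μv i * r)) :=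
          Finset.prod_le_prod' fun i _ => step4 i
      _ = ENNReal.ofReal (Real.exp (lam * A.trace * r)) := by
          rw [← ENNReal.ofReal_prod_of_nonneg (fun i _ => (Real.exp_pos _).le), ← Real.exp_sum]
          congr 1
          rw [htr, Finset.mul_sum, Finset.sum_mul]
  calc stdGaussian p {y | a ≤ g y}
      ≤ ∫⁻ y, ENNReal.ofReal (Real.exp (lam * (g y - a))) ∂stdGaussian p := step1
    _ = ENNReal.ofReal (Real.exp (-(lam * a)))
        * ∏ i, ENNReal.ofReal ((Real.sqrt (1 - 2 * (lam * μv i)))⁻¹) := by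
          rw [step2, step3]
    _ ≤ ENNReal.ofReal (Real.exp (-(lam * a)))
        * ENNReal.ofReal (Real.exp (lam * A.trace * r)) := mul_le_mul_right step5 _
    _ = ENNReal.ofReal (Real.exp (-(lam * a) + lam * A.trace * r)) := by
          rw [← ENNReal.ofReal_mul (Real.exp_pos _).le, ← Real.exp_add]
    _ = ENNReal.ofReal (Real.exp (-t ^ 2 / 2)) := by
          congr 2
          rw [hadef, hrdef, hlamdef, ← hσ2]
          field_simp
          ring
end

section
/- Let Σ be a p×p real symmetric matrix such that Σ − I_{p×p} is positive semidefinite of rank r, and let P be a p×k real matrix with orthonormal columns, i.e., Pᵀ P = I_{k×k}. Then Pᵀ Σ P is invertible, every eigenvalue of (Pᵀ Σ P)^{-1} lies in the interval (0, 1], and tr((Pᵀ Σ P)^{-1}) ≥ k − r. -/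
open MeasureTheory ProbabilityTheory Matrix

/-- If Σ = I + Γ with Γ ⪰ 0 of rank r and P has orthonormal columns, then PᵀΣP is
    invertible, the eigenvalues of (PᵀΣP)⁻¹ lie in (0,1], and tr((PᵀΣP)⁻¹) ≥ k − r. -/
theorem stmt16 {p k r : ℕ} (Sg : Matrix (Fin p) (Fin p) ℝ) (hsymm : Sg.IsSymm)
    (hpsd : (Sg - 1).PosSemidef) (hr : (Sg - 1).rank = r)
    (P : Matrix (Fin p) (Fin k) ℝ) (hP : Pᵀ * P = 1) :
    IsUnit (Pᵀ * Sg * P) ∧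
      (∀ (μ : ℝ) (v : Fin k → ℝ), v ≠ 0 → (Pᵀ * Sg * P)⁻¹ *ᵥ v = μ • v → 0 < μ ∧ μ ≤ 1) ∧
      (k : ℝ) - (r : ℝ) ≤ ((Pᵀ * Sg * P)⁻¹).trace := by
  classical
  set Γ : Matrix (Fin p) (Fin p) ℝ := Sg - 1 with hΓ
  set M : Matrix (Fin k) (Fin k) ℝ := Pᵀ * Γ * P with hMdef
  have hMpsd : M.PosSemidef := by
    have := hpsd.conjTranspose_mul_mul_same P
    simpa [conjTranspose_eq_transpose_of_trivial] using this
  have hB : Pᵀ * Sg * P = 1 + M := by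
    have hSg : Sg = 1 + Γ := by rw [hΓ]; exact eq_add_of_sub_eq' rfl
    rw [hSg, hMdef]
    rw [Matrix.mul_add, Matrix.add_mul, Matrix.mul_one, hP]
  have hBpd : (1 + M).PosDef := Matrix.PosDef.add_posSemidef Matrix.PosDef.one hMpsd
  have hdet : IsUnit (1 + M).det := isUnit_iff_ne_zero.mpr hBpd.det_pos.ne'
  have hunit : IsUnit (Pᵀ * Sg * P) := by
    rw [hB, Matrix.isUnit_iff_isUnit_det]
    exact hdet
  have hinv1 : (1 + M) * (Pᵀ * Sg * P)⁻¹ = 1 := by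
    rw [hB]; exact Matrix.mul_nonsing_inv _ hdet
  refine ⟨hunit, ?_, ?_⟩
  · intro μ v hv hev
    rw [hB] at hev
    have h1 : (1 + M) *ᵥ ((1 + M)⁻¹ *ᵥ v) = v := by
      rw [Matrix.mulVec_mulVec, Matrix.mul_nonsing_inv _ hdet, Matrix.one_mulVec]
    rw [hev, Matrix.mulVec_smul] at h1
    have hμ : μ ≠ 0 := by
      rintro rfl; rw [zero_smul] at h1; exact hv h1.symm
    have h2 : (1 + M) *ᵥ v = μ⁻¹ • v := by
      have := congrArg (fun w => μ⁻¹ • w) h1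
      simpa [smul_smul, inv_mul_cancel₀ hμ] using this
    have hvpos : (0:ℝ) < v ⬝ᵥ v := by
      have := dotProduct_star_self_pos_iff (v := v)
      simpa using this.mpr hv
    have hq : v ⬝ᵥ ((1 + M) *ᵥ v) = μ⁻¹ * (v ⬝ᵥ v) := by
      rw [h2, dotProduct_smul]; rfl
    have hq2 : v ⬝ᵥ v ≤ v ⬝ᵥ ((1 + M) *ᵥ v) := by
      have hM2 : 0 ≤ v ⬝ᵥ (M *ᵥ v) := by simpa using hMpsd.dotProduct_mulVec_nonneg v
      rw [Matrix.add_mulVec, dotProduct_add, Matrix.one_mulVec]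
      linarith
    have hinvge : 1 ≤ μ⁻¹ := by
      rw [hq] at hq2
      nlinarith
    have hμpos : 0 < μ := by
      have : 0 < μ⁻¹ := lt_of_lt_of_le zero_lt_one hinvge
      exact inv_pos.mp this
    refine ⟨hμpos, ?_⟩
    have hmc : μ * μ⁻¹ = 1 := mul_inv_cancel₀ hμ
    nlinarith
  · -- trace bound
    have hH := hMpsd.isHermitian
    set U : Matrix (Fin k) (Fin k) ℝ := (Matrix.IsHermitian.eigenvectorUnitary hH :
      Matrix (Fin k) (Fin k) ℝ) with hU
    set lam := hH.eigenvalues with hlam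
    have hspec : M = U * Matrix.diagonal (RCLike.ofReal ∘ lam) * star U :=
      hH.spectral_theorem
    have hUU : star U * U = 1 :=
      Unitary.star_mul_self_of_mem (Matrix.IsHermitian.eigenvectorUnitary hH).2
    have hUU' : U * star U = 1 :=
      Unitary.mul_star_self_of_mem (Matrix.IsHermitian.eigenvectorUnitary hH).2
    have hlampos : ∀ i, (0:ℝ) < 1 + lam i := fun i => by
      have := hMpsd.eigenvalues_nonneg i
      linarith
    have hBspec : 1 + M = U * Matrix.diagonal (fun i => 1 + lam i) * star U := by
      have hone : (1 : Matrix (Fin k) (Fin k) ℝ) = U * Matrix.diagonal (fun _ => (1:ℝ)) * star U := by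
        rw [Matrix.diagonal_one, Matrix.mul_one, hUU']
      calc 1 + M = U * Matrix.diagonal (fun _ => (1:ℝ)) * star U
            + U * Matrix.diagonal (RCLike.ofReal ∘ lam) * star U := by rw [← hone, ← hspec]
        _ = U * (Matrix.diagonal (fun _ => (1:ℝ)) + Matrix.diagonal (RCLike.ofReal ∘ lam)) * star U := by
            rw [Matrix.mul_add, Matrix.add_mul]
        _ = U * Matrix.diagonal (fun i => 1 + lam i) * star U := by
            rw [Matrix.diagonal_add]; rfl
    set C : Matrix (Fin k) (Fin k) ℝ := U * Matrix.diagonal (fun i => (1 + lam i)⁻¹) * star U with hC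
    have key : ∀ (D E : Matrix (Fin k) (Fin k) ℝ),
        (U * D * star U) * (U * E * star U) = U * (D * E) * star U := by
      intro D E
      calc (U * D * star U) * (U * E * star U)
          = U * (D * ((star U * U) * (E * star U))) := by simp only [Matrix.mul_assoc]
        _ = U * (D * E) * star U := by rw [hUU, Matrix.one_mul]; simp only [Matrix.mul_assoc]
    have hmulC : (1 + M) * C = 1 := by
      rw [hBspec, hC, key, Matrix.diagonal_mul_diagonal]
      have : (fun i => (1 + lam i) * (1 + lam i)⁻¹) = fun _ => (1:ℝ) := by
        funext i; exact mul_inv_cancel₀ (hlampos i).ne'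
      rw [this, Matrix.diagonal_one, Matrix.mul_one, hUU']
    have hinvC : (Pᵀ * Sg * P)⁻¹ = C := by
      rw [hB]
      exact Matrix.inv_eq_right_inv hmulC
    rw [hinvC]
    have htr : C.trace = ∑ i, (1 + lam i)⁻¹ := by
      rw [hC, Matrix.trace_mul_cycle, hUU, Matrix.one_mul, Matrix.trace_diagonal]
    rw [htr]
    -- rank bound
    have hrankM : M.rank ≤ r := by
      calc M.rank ≤ (Pᵀ * Γ).rank := Matrix.rank_mul_le_left _ _
        _ ≤ Γ.rank := Matrix.rank_mul_le_right _ _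
        _ = r := hr
    set S : Finset (Fin k) := Finset.univ.filter (fun i => lam i ≠ 0) with hS
    have hcardS : S.card = M.rank := by
      rw [hH.rank_eq_card_non_zero_eigs, Fintype.card_subtype]
    have hSr : S.card ≤ r := hcardS ▸ hrankM
    have hsum : ∑ i ∈ Sᶜ, (1 + lam i)⁻¹ ≤ ∑ i, (1 + lam i)⁻¹ := by
      apply Finset.sum_le_sum_of_subset_of_nonneg (Finset.subset_univ _)
      intro i _ _
      exact (inv_pos.mpr (hlampos i)).le
    have hsumc : ∑ i ∈ Sᶜ, (1 + lam i)⁻¹ = (Sᶜ.card : ℝ) := by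
      rw [Finset.sum_congr rfl (fun i hi => ?_), Finset.sum_const, nsmul_eq_mul, mul_one]
      have : lam i = 0 := by
        by_contra h
        exact (Finset.mem_compl.mp hi) (Finset.mem_filter.mpr ⟨Finset.mem_univ _, h⟩)
      rw [this]; norm_num
    have hcardc : (Sᶜ.card : ℝ) = (k : ℝ) - (S.card : ℝ) := by
      have hle : S.card ≤ k := by
        simpa [Fintype.card_fin] using Finset.card_le_univ S
      rw [Finset.card_compl, Fintype.card_fin, Nat.cast_sub hle]
    have : (k:ℝ) - (r:ℝ) ≤ (Sᶜ.card : ℝ) := by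
      rw [hcardc]
      have : (S.card : ℝ) ≤ (r : ℝ) := by exact_mod_cast hSr
      linarith
    linarith [hsum, hsumc ▸ this]
end
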